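/- arXiv:1906.00684 — 2 statements merged into one kernel-verified Lean document; each statement's English description precedes it below -/
import Mathlib

section
/- Let (Z, μ) be a measure space, and let p_src, p_tgt : Z → ℝ be nonnegative measurable density functions with ∫ p_src dμ = 1. Let f, g, h : Z → ℝ be nonnegative measurable functions such that g(z) ≤ f(z) + h(z) for all z ∈ Z (the triangle-inequality decomposition of the target loss integrand), and suppose there are constants c > 0 and ε > 0 with h(z) ≤ c for all z ∈ Z and |p_src(z) − p_tgt(z)| ≤ ε · p_src(z) for all z ∈ Z. Assume p_src · f and p_src · h are μ-integrable. Define L_src = ∫ p_src(z) f(z) dμ(z) and L_tgt = ∫ p_tgt(z) g(z) dμ(z). Then L_tgt − L_src ≤ ε · L_src + c + c · ε. -/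
/-! The density bound `|p_src - p_tgt| ≤ ε p_src` gives `|p_tgt| ≤ (1 + ε) p_src`, so together with
`0 ≤ g ≤ f + h` the target integrand is dominated by `(1 + ε) (p_src f + p_src h)`. Integrating,
`L_tgt ≤ (1 + ε) (L_src + ∫ p_src h)`, and `∫ p_src h ≤ c ∫ p_src = c`. -/

open MeasureTheory

lemma abs_le_one_add_mul_of_abs_sub_le {a b ε : ℝ} (ha : 0 ≤ a) (hab : |a - b| ≤ ε * a) :
    |b| ≤ (1 + ε) * a :=
  calc |b| ≤ |a| + |a - b| := by linarith [abs_sub_abs_le_abs_sub b a, abs_sub_comm a b]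
    _ ≤ (1 + ε) * a := by rw [abs_of_nonneg ha]; linarith

lemma abs_mul_le_one_add_mul_mul {a b x y ε : ℝ} (ha : 0 ≤ a) (hab : |a - b| ≤ ε * a)
    (hx : 0 ≤ x) (hxy : x ≤ y) : |b * x| ≤ (1 + ε) * (a * y) := by
  have hb := abs_le_one_add_mul_of_abs_sub_le ha hab
  calc |b * x| = |b| * x := by rw [abs_mul, abs_of_nonneg hx]
    _ ≤ (1 + ε) * a * y := mul_le_mul hb hxy hx ((abs_nonneg b).trans hb)
    _ = (1 + ε) * (a * y) := mul_assoc _ _ _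

namespace MeasureTheory

variable {α : Type*} [MeasurableSpace α] {μ : Measure α}

lemma integral_le_of_abs_le {u v : α → ℝ} (hu : AEStronglyMeasurable u μ) (hv : Integrable v μ)
    (huv : ∀ x, |u x| ≤ v x) : ∫ x, u x ∂μ ≤ ∫ x, v x ∂μ :=
  integral_mono (hv.mono' hu (ae_of_all _ huv)) hv fun x => (le_abs_self _).trans (huv x)

lemma integral_mul_le_const_mul_integral {p h : α → ℝ} {c : ℝ} (hp : Integrable p μ)
    (hph : Integrable (fun x => p x * h x) μ) (hp_nonneg : ∀ x, 0 ≤ p x) (hhc : ∀ x, h x ≤ c) :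
    ∫ x, p x * h x ∂μ ≤ c * ∫ x, p x ∂μ := by
  rw [← integral_const_mul]
  refine integral_mono hph (hp.const_mul c) fun x => ?_
  simpa only [mul_comm c] using mul_le_mul_of_nonneg_left (hhc x) (hp_nonneg x)

end MeasureTheory

theorem dane_theorem1_general
    {Z : Type*} [MeasurableSpace Z] (μ : Measure Z)
    (p_src p_tgt f g h : Z → ℝ)
    (hpt_meas : Measurable p_tgt)
    (hg_meas : Measurable g)
    (hps_nonneg : ∀ z, 0 ≤ p_src z)
    (hg_nonneg : ∀ z, 0 ≤ g z)
    (hps_prob : ∫ z, p_src z ∂μ = 1)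
    (hgfh : ∀ z, g z ≤ f z + h z)
    (c ε : ℝ) (hε : 0 < ε)
    (hhc : ∀ z, h z ≤ c)
    (hdens : ∀ z, |p_src z - p_tgt z| ≤ ε * p_src z)
    (hint_f : Integrable (fun z => p_src z * f z) μ)
    (hint_h : Integrable (fun z => p_src z * h z) μ) :
    (∫ z, p_tgt z * g z ∂μ) - (∫ z, p_src z * f z ∂μ) ≤
      ε * (∫ z, p_src z * f z ∂μ) + c + c * ε := by
  have htgt : ∫ z, p_tgt z * g z ∂μ ≤
      (1 + ε) * ((∫ z, p_src z * f z ∂μ) + ∫ z, p_src z * h z ∂μ) :=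
    calc ∫ z, p_tgt z * g z ∂μ ≤ ∫ z, (1 + ε) * (p_src z * f z + p_src z * h z) ∂μ :=
          integral_le_of_abs_le (hpt_meas.mul hg_meas).aestronglyMeasurable
            ((hint_f.add hint_h).const_mul _) fun z => by
              rw [← mul_add]
              exact abs_mul_le_one_add_mul_mul (hps_nonneg z) (hdens z) (hg_nonneg z) (hgfh z)
      _ = (1 + ε) * ((∫ z, p_src z * f z ∂μ) + ∫ z, p_src z * h z ∂μ) := by
          rw [integral_const_mul, integral_add hint_f hint_h]
  have hsrc_h : ∫ z, p_src z * h z ∂μ ≤ c := by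
    simpa only [hps_prob, mul_one] using integral_mul_le_const_mul_integral
      (integrable_of_integral_eq_one hps_prob) hint_h hps_nonneg hhc
  have := mul_le_mul_of_nonneg_left hsrc_h (by positivity : (0 : ℝ) ≤ 1 + ε)
  linarith

theorem dane_theorem1
    {Z : Type*} [MeasurableSpace Z] (μ : Measure Z)
    (p_src p_tgt f g h : Z → ℝ)
    (hps_meas : Measurable p_src) (hpt_meas : Measurable p_tgt)
    (hf_meas : Measurable f) (hg_meas : Measurable g) (hh_meas : Measurable h)
    (hps_nonneg : ∀ z, 0 ≤ p_src z) (hpt_nonneg : ∀ z, 0 ≤ p_tgt z)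
    (hf_nonneg : ∀ z, 0 ≤ f z) (hg_nonneg : ∀ z, 0 ≤ g z) (hh_nonneg : ∀ z, 0 ≤ h z)
    (hps_prob : ∫ z, p_src z ∂μ = 1)
    (hgfh : ∀ z, g z ≤ f z + h z)
    (c ε : ℝ) (hc : 0 < c) (hε : 0 < ε)
    (hhc : ∀ z, h z ≤ c)
    (hdens : ∀ z, |p_src z - p_tgt z| ≤ ε * p_src z)
    (hint_f : Integrable (fun z => p_src z * f z) μ)
    (hint_h : Integrable (fun z => p_src z * h z) μ) :
    (∫ z, p_tgt z * g z ∂μ) - (∫ z, p_src z * f z ∂μ) ≤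
      ε * (∫ z, p_src z * f z ∂μ) + c + c * ε :=
  dane_theorem1_general μ p_src p_tgt f g h hpt_meas hg_meas hps_nonneg hg_nonneg hps_prob hgfh c ε
    hε hhc hdens hint_f hint_h
end

section
/- Let Y be a finite type, Z a measure space with measure μ, and let P̂_src, P̂_tgt, Pθ : Z → Y → ℝ be measurable families of functions. Define D(P, Q) = ∑_{y ∈ Y} |P(y) − Q(y)| (the ℓ¹ distance). Let p_src, p_tgt : Z → ℝ be nonnegative measurable densities with ∫ p_src dμ = 1, and suppose there exist c > 0 and ε > 0 such that for all z ∈ Z: D(P̂_src(z), P̂_tgt(z)) < c and |p_src(z) − p_tgt(z)| ≤ ε · p_src(z). Define L_src = ∫ p_src(z) · D(P̂_src(z), Pθ(z)) dμ(z) and L_tgt = ∫ p_tgt(z) · D(P̂_tgt(z), Pθ(z)) dμ(z), and assume the functions z ↦ p_src(z)·D(P̂_src(z), Pθ(z)) and z ↦ p_src(z)·D(P̂_src(z), P̂_tgt(z)) are μ-integrable. Then L_tgt − L_src ≤ ε · L_src + c + c · ε. -/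
open MeasureTheory

theorem dane_theorem1_l1
    {Y : Type*} [Fintype Y]
    {Z : Type*} [MeasurableSpace Z] (μ : Measure Z)
    (Psrc Ptgt Pθ : Z → Y → ℝ)
    (hPsrc_meas : ∀ y, Measurable (fun z => Psrc z y))
    (hPtgt_meas : ∀ y, Measurable (fun z => Ptgt z y))
    (hPθ_meas : ∀ y, Measurable (fun z => Pθ z y))
    (D : (Y → ℝ) → (Y → ℝ) → ℝ)
    (hD : ∀ P Q, D P Q = ∑ y, |P y - Q y|)
    (p_src p_tgt : Z → ℝ)
    (hps_meas : Measurable p_src) (hpt_meas : Measurable p_tgt)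
    (hps_nonneg : ∀ z, 0 ≤ p_src z) (hpt_nonneg : ∀ z, 0 ≤ p_tgt z)
    (hps_prob : ∫ z, p_src z ∂μ = 1)
    (c ε : ℝ) (hc : 0 < c) (hε : 0 < ε)
    (hgt : ∀ z, D (Psrc z) (Ptgt z) < c)
    (hdens : ∀ z, |p_src z - p_tgt z| ≤ ε * p_src z)
    (hint_f : Integrable (fun z => p_src z * D (Psrc z) (Pθ z)) μ)
    (hint_h : Integrable (fun z => p_src z * D (Psrc z) (Ptgt z)) μ) :
    (∫ z, p_tgt z * D (Ptgt z) (Pθ z) ∂μ) - (∫ z, p_src z * D (Psrc z) (Pθ z) ∂μ) ≤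
      ε * (∫ z, p_src z * D (Psrc z) (Pθ z) ∂μ) + c + c * ε := by
  -- p_src is integrable since its integral is 1 ≠ 0
  have hps_int : Integrable p_src μ := by
    by_contra h
    rw [integral_undef h] at hps_prob
    norm_num at hps_prob
  -- pointwise bound
  set Ls := ∫ z, p_src z * D (Psrc z) (Pθ z) ∂μ with hLs
  have hD_nonneg : ∀ (P Q : Y → ℝ), 0 ≤ D P Q := by
    intro P Q; rw [hD]; exact Finset.sum_nonneg (fun y _ => abs_nonneg _)
  have hpt_le : ∀ z, p_tgt z ≤ (1 + ε) * p_src z := by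
    intro z
    have h := hdens z
    have := neg_abs_le (p_src z - p_tgt z)
    nlinarith
  have htri : ∀ z, D (Ptgt z) (Pθ z) ≤ D (Psrc z) (Pθ z) + D (Psrc z) (Ptgt z) := by
    intro z
    simp only [hD]
    rw [← Finset.sum_add_distrib]
    apply Finset.sum_le_sum
    intro y _
    have : Ptgt z y - Pθ z y = (Psrc z y - Pθ z y) - (Psrc z y - Ptgt z y) := by ring
    rw [this]
    exact abs_sub _ _
  -- the dominating integrable function
  have hg_int : Integrable (fun z => (1 + ε) * (p_src z * D (Psrc z) (Pθ z))
      + ((1 + ε) * c) * p_src z) μ :=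
    (hint_f.const_mul _).add (hps_int.const_mul _)
  have hbound : ∀ z, p_tgt z * D (Ptgt z) (Pθ z) ≤
      (1 + ε) * (p_src z * D (Psrc z) (Pθ z)) + ((1 + ε) * c) * p_src z := by
    intro z
    have h1 : p_tgt z * D (Ptgt z) (Pθ z) ≤ ((1 + ε) * p_src z) * D (Ptgt z) (Pθ z) :=
      mul_le_mul_of_nonneg_right (hpt_le z) (hD_nonneg _ _)
    have h2 : ((1 + ε) * p_src z) * D (Ptgt z) (Pθ z) ≤
        ((1 + ε) * p_src z) * (D (Psrc z) (Pθ z) + c) := by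
      apply mul_le_mul_of_nonneg_left _ (mul_nonneg (by linarith) (hps_nonneg z))
      have := htri z
      have := (hgt z).le
      linarith
    nlinarith [hps_nonneg z, hε.le]
  have hmono : (∫ z, p_tgt z * D (Ptgt z) (Pθ z) ∂μ) ≤
      ∫ z, ((1 + ε) * (p_src z * D (Psrc z) (Pθ z)) + ((1 + ε) * c) * p_src z) ∂μ := by
    apply integral_mono_of_nonneg
    · exact Filter.Eventually.of_forall (fun z => mul_nonneg (hpt_nonneg z) (hD_nonneg _ _))
    · exact hg_int
    · exact Filter.Eventually.of_forall hbound
  have hcalc : (∫ z, ((1 + ε) * (p_src z * D (Psrc z) (Pθ z)) + ((1 + ε) * c) * p_src z) ∂μ)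
      = (1 + ε) * Ls + (1 + ε) * c := by
    rw [integral_add (hint_f.const_mul _) (hps_int.const_mul _),
      MeasureTheory.integral_const_mul, MeasureTheory.integral_const_mul, hps_prob, mul_one]
  rw [hcalc] at hmono
  linarith
end
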